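/- arXiv:2408.16000 — 7 statements merged into one kernel-verified Lean document; each statement's English description precedes it below -/
import Mathlib

section
/- Let a > 0, t0 = (a+1)/a, T0 = (a+1)^2/a. The function x0 : ℝ → ℝ defined as the T0-periodic extension of x0(t) = t for t ∈ [0,1], x0(t) = −a(t − t0) for t ∈ [1, t0+1], x0(t) = t − T0 for t ∈ [t0+1, T0] is continuous, satisfies x0(t + T0) = x0(t) for all t ∈ ℝ, and for every t ∈ ℝ not of the form 1 + kT0 or t0 + 1 + kT0 with k ∈ ℤ, x0 is differentiable at t with x0′(t) = R(x0(t−1)). -/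
/-!
On `[-a, T0 + 1]`, an interval longer than a period, periodicity turns `x0` into a
piecewise affine function whose pieces agree at the breakpoints `1` and `t0 + 1`, so it is
continuous there, and periodicity spreads continuity to all of `ℝ`. Away from the breakpoints
`x0` is locally affine: of slope `-a` on `(1, t0 + 1)`, where the delayed value `x0 (t - 1)` is
positive, and of slope `1` on `(t0 + 1, T0 + 1)`, where it is nonpositive; in both cases this is
the slope `R` prescribes, and every other point is a translate of these by a multiple of `T0`.
-/

noncomputable def R (a x : ℝ) : ℝ := if x ≤ 0 then 1 else -a

open Set Function

namespace Function.Periodic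

variable {c : ℝ}

theorem continuousAt_add_int_mul {β : Type*} [TopologicalSpace β] {f : ℝ → β}
    (hf : Periodic f c) (n : ℤ) {x : ℝ} (h : ContinuousAt f x) :
    ContinuousAt f (x + n * c) := by
  have hshift : f = fun y ↦ f (y - n * c) := funext fun y ↦ (hf.sub_int_mul_eq n).symm
  rw [hshift]
  exact ContinuousAt.comp (by rwa [add_sub_cancel_right]) (continuous_sub_right _).continuousAt

theorem hasDerivAt_add_int_mul {E : Type*} [NormedAddCommGroup E] [NormedSpace ℝ E]
    {f : ℝ → E} {f' : E} (hf : Periodic f c) (n : ℤ) {x : ℝ} (h : HasDerivAt f f' x) :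
    HasDerivAt f f' (x + n * c) := by
  have hshift : f = fun y ↦ f (y - n * c) := funext fun y ↦ (hf.sub_int_mul_eq n).symm
  rw [hshift]
  exact HasDerivAt.comp_sub_const _ _ (by rwa [add_sub_cancel_right])

/-- Every point is a translate by a multiple of the period of a point of `(a, a + c]`, which
lies in the interior of `[a, b]`. -/
theorem continuous_of_continuousOn_Icc {β : Type*} [TopologicalSpace β] {f : ℝ → β}
    (hf : Periodic f c) (hc : 0 < c) {a b : ℝ} (hab : a + c < b)
    (h : ContinuousOn f (Icc a b)) : Continuous f := by
  refine continuous_iff_continuousAt.2 fun x ↦ ?_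
  obtain ⟨hlo, hhi⟩ := toIocMod_mem_Ioc hc a x
  rw [← toIocMod_add_toIocDiv_mul hc a x]
  exact hf.continuousAt_add_int_mul _
    (h.continuousAt (Icc_mem_nhds hlo (hhi.trans_lt hab)))

end Function.Periodic

structure IsPeriodicSawtooth (a t0 T0 : ℝ) (x0 : ℝ → ℝ) : Prop where
  periodic : Periodic x0 T0
  eqOn_rise : EqOn x0 id (Icc 0 1)
  eqOn_fall : EqOn x0 (fun t ↦ -a * (t - t0)) (Icc 1 (t0 + 1))
  eqOn_return : EqOn x0 (fun t ↦ t - T0) (Icc (t0 + 1) T0)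

namespace IsPeriodicSawtooth

variable {a t0 T0 : ℝ} {x0 : ℝ → ℝ}

theorem eqOn_rise_extend (hx : IsPeriodicSawtooth a t0 T0 x0) (hT : T0 = t0 + 1 + a) :
    EqOn x0 id (Icc (-a) 1) := by
  intro t ⟨hlo, hhi⟩
  rcases le_or_gt 0 t with h0 | h0
  · exact hx.eqOn_rise ⟨h0, hhi⟩
  · have h := hx.eqOn_return (x := t + T0) ⟨by linarith, by linarith⟩
    rw [hx.periodic t] at h
    simp only [h, add_sub_cancel_right, id]

theorem eqOn_return_extend (hx : IsPeriodicSawtooth a t0 T0 x0) :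
    EqOn x0 (fun t ↦ t - T0) (Icc (t0 + 1) (T0 + 1)) := by
  intro t ⟨hlo, hhi⟩
  rcases le_or_gt t T0 with hT | hT
  · exact hx.eqOn_return ⟨hlo, hT⟩
  · have h := hx.eqOn_rise (x := t - T0) ⟨by linarith, by linarith⟩
    rwa [hx.periodic.sub_eq] at h

theorem continuousOn_Icc (hx : IsPeriodicSawtooth a t0 T0 x0) (ha : 0 ≤ a) (ht0 : 0 ≤ t0)
    (hT : T0 = t0 + 1 + a) : ContinuousOn x0 (Icc (-a) (T0 + 1)) := by
  have hrise : ContinuousOn x0 (Icc (-a) 1) :=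
    continuousOn_id.congr (hx.eqOn_rise_extend hT)
  have hfall : ContinuousOn x0 (Icc 1 (t0 + 1)) :=
    (continuousOn_const.mul (continuousOn_id.sub continuousOn_const)).congr hx.eqOn_fall
  have hreturn : ContinuousOn x0 (Icc (t0 + 1) (T0 + 1)) :=
    (continuousOn_id.sub continuousOn_const).congr hx.eqOn_return_extend
  have h := (hrise.union_of_isClosed hfall isClosed_Icc isClosed_Icc).union_of_isClosed hreturn
    (isClosed_Icc.union isClosed_Icc) isClosed_Icc
  rwa [Icc_union_Icc_eq_Icc (by linarith) (by linarith),
    Icc_union_Icc_eq_Icc (by linarith) (by linarith)] at h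

theorem continuous (hx : IsPeriodicSawtooth a t0 T0 x0) (ha : 0 ≤ a) (ht0 : 0 ≤ t0)
    (hT : T0 = t0 + 1 + a) : Continuous x0 :=
  hx.periodic.continuous_of_continuousOn_Icc (by linarith) (by linarith)
    (hx.continuousOn_Icc ha ht0 hT)

theorem pos_of_mem_Ioo (hx : IsPeriodicSawtooth a t0 T0 x0) (ha : 0 < a) {u : ℝ}
    (hu : u ∈ Ioo 0 t0) : 0 < x0 u := by
  rcases le_or_gt u 1 with h1 | h1
  · rw [hx.eqOn_rise ⟨hu.1.le, h1⟩]
    exact hu.1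
  · rw [hx.eqOn_fall ⟨h1.le, by linarith [hu.2]⟩]
    nlinarith [hu.2]

theorem nonpos_of_mem_Icc (hx : IsPeriodicSawtooth a t0 T0 x0) (ha : 0 ≤ a) (ht0 : 1 ≤ t0)
    {u : ℝ} (hu : u ∈ Icc t0 T0) : x0 u ≤ 0 := by
  rcases le_or_gt u (t0 + 1) with h1 | h1
  · rw [hx.eqOn_fall ⟨by linarith [hu.1], h1⟩]
    nlinarith [hu.1]
  · rw [hx.eqOn_return ⟨h1.le, hu.2⟩]
    linarith [hu.2]

theorem hasDerivAt_of_mem_Ioo_fall (hx : IsPeriodicSawtooth a t0 T0 x0) (ha : 0 < a)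
    {s : ℝ} (hs : s ∈ Ioo 1 (t0 + 1)) : HasDerivAt x0 (R a (x0 (s - 1))) s := by
  have hR : R a (x0 (s - 1)) = -a :=
    if_neg (not_le.2 (hx.pos_of_mem_Ioo ha ⟨by linarith [hs.1], by linarith [hs.2]⟩))
  have hline : HasDerivAt (fun t ↦ -a * (t - t0)) (-a) s := by
    simpa using ((hasDerivAt_id s).sub_const t0).const_mul (-a)
  rw [hR]
  exact hline.congr_of_eventuallyEq
    ((hx.eqOn_fall.mono Ioo_subset_Icc_self).eventuallyEq_of_mem (Ioo_mem_nhds hs.1 hs.2))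

theorem hasDerivAt_of_mem_Ioo_return (hx : IsPeriodicSawtooth a t0 T0 x0) (ha : 0 ≤ a)
    (ht0 : 1 ≤ t0) {s : ℝ} (hs : s ∈ Ioo (t0 + 1) (T0 + 1)) :
    HasDerivAt x0 (R a (x0 (s - 1))) s := by
  have hR : R a (x0 (s - 1)) = 1 :=
    if_pos (hx.nonpos_of_mem_Icc ha ht0 ⟨by linarith [hs.1], by linarith [hs.2]⟩)
  have hline : HasDerivAt (fun t ↦ t - T0) 1 s := (hasDerivAt_id s).sub_const T0
  rw [hR]
  exact hline.congr_of_eventuallyEq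
    ((hx.eqOn_return_extend.mono Ioo_subset_Icc_self).eventuallyEq_of_mem (Ioo_mem_nhds hs.1 hs.2))

theorem hasDerivAt (hx : IsPeriodicSawtooth a t0 T0 x0) (ha : 0 < a) (ht0 : 1 ≤ t0)
    (hT : T0 = t0 + 1 + a) {t : ℝ}
    (ht : ∀ k : ℤ, t ≠ 1 + k * T0 ∧ t ≠ t0 + 1 + k * T0) :
    HasDerivAt x0 (R a (x0 (t - 1))) t := by
  have hT0 : 0 < T0 := by linarith
  set s := toIcoMod hT0 1 t
  set n := toIcoDiv hT0 1 t
  have hst : s + n * T0 = t := toIcoMod_add_toIcoDiv_mul hT0 1 t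
  obtain ⟨hlo, hhi⟩ := toIcoMod_mem_Ico hT0 1 t
  have hne_one : s ≠ 1 := fun h ↦ (ht n).1 (by rw [← hst, h])
  have hne_t0 : s ≠ t0 + 1 := fun h ↦ (ht n).2 (by rw [← hst, h])
  have hshift : x0 (t - 1) = x0 (s - 1) := by
    rw [← hst, ← hx.periodic.int_mul n (s - 1)]
    congr 1
    ring
  rw [hshift, ← hst]
  refine hx.periodic.hasDerivAt_add_int_mul n ?_
  rcases lt_or_gt_of_ne hne_t0 with h | h
  · exact hx.hasDerivAt_of_mem_Ioo_fall ha ⟨lt_of_le_of_ne hlo hne_one.symm, h⟩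
  · exact hx.hasDerivAt_of_mem_Ioo_return ha.le ht0 ⟨h, by linarith⟩

end IsPeriodicSawtooth

/-- for `a > 0`, `t0 = (a+1)/a`, `T0 = (a+1)^2/a`, the `T0`-periodic
extension `x0` of the piecewise function `t` on `[0,1]`, `-a(t-t0)` on `[1,t0+1]`,
`t - T0` on `[t0+1,T0]` is continuous, `T0`-periodic, and away from the points
`1 + k T0`, `t0 + 1 + k T0` (`k ∈ ℤ`) it is differentiable with
`x0'(t) = R (x0 (t-1))`. -/
theorem stmt_0 (a : ℝ) (ha : 0 < a) (t0 T0 : ℝ)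
    (ht0 : t0 = (a + 1) / a) (hT0 : T0 = (a + 1) ^ 2 / a)
    (x0 : ℝ → ℝ)
    (hx0per : ∀ t : ℝ, x0 (t + T0) = x0 t)
    (hx0a : ∀ t ∈ Set.Icc (0 : ℝ) 1, x0 t = t)
    (hx0b : ∀ t ∈ Set.Icc (1 : ℝ) (t0 + 1), x0 t = -a * (t - t0))
    (hx0c : ∀ t ∈ Set.Icc (t0 + 1) T0, x0 t = t - T0) :
    Continuous x0 ∧
    (∀ t : ℝ, x0 (t + T0) = x0 t) ∧
    (∀ t : ℝ, (∀ k : ℤ, t ≠ 1 + (k : ℝ) * T0 ∧ t ≠ t0 + 1 + (k : ℝ) * T0) →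
      HasDerivAt x0 (R a (x0 (t - 1))) t) := by
  have hone_lt_t0 : 1 < t0 := by
    rw [ht0, lt_div_iff₀ ha]
    linarith
  have hT : T0 = t0 + 1 + a := by
    rw [ht0, hT0]
    field_simp
    ring
  have hx : IsPeriodicSawtooth a t0 T0 x0 :=
    ⟨hx0per, fun t ht ↦ hx0a t ht, fun t ht ↦ hx0b t ht, fun t ht ↦ hx0c t ht⟩
  exact ⟨hx.continuous ha.le (by linarith) hT, hx0per,
    fun t ht ↦ hx.hasDerivAt ha hone_lt_t0.le hT ht⟩
end

section
/- Let a > 0 and let φ ∈ C([−1,0]) satisfy φ(t) < 0 for t ∈ [−1,0) and φ(0) = 0. If x : [−1,∞) → ℝ is a solution of the relay equation ẋ(t) = R(x(t−1)) with initial function φ, then x(t) = x0(t) for all t ≥ 0, where x0 is the T0-periodic function with x0(t) = t on [0,1], x0(t) = −a(t − t0) on [1, t0+1], x0(t) = t − T0 on [t0+1, T0]. -/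
/-- `x : [-1,∞) → ℝ` is a solution of the relay equation `x'(t) = R a (x (t-1))`
with initial function `φ ∈ C([-1,0])`: `x` is continuous on `[-1,∞)`, coincides
with `φ` on `[-1,0]`, and for every `t > 0` outside an exceptional set having
finitely many points in each bounded interval, `x` is differentiable at `t` with
`x'(t) = R a (x (t-1))`. -/
def IsSolution (a : ℝ) (φ x : ℝ → ℝ) : Prop :=
  ContinuousOn x (Set.Ici (-1 : ℝ)) ∧
  (∀ t ∈ Set.Icc (-1 : ℝ) 0, x t = φ t) ∧
  ∃ S : Set ℝ, (∀ A B : ℝ, (S ∩ Set.Icc A B).Finite) ∧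
    ∀ t : ℝ, 0 < t → t ∉ S → HasDerivAt x (R a (x (t - 1))) t

/-!
Since the delay is `1` and the relay only sees the sign of `x (t - 1)`, a solution that restarts
at `b` (negative on `[b - 1, b)`, zero at `b`) is forced to be piecewise linear: slope `1` on
`[b, b + 1]`; slope `-a` on `[b + 1, b + t0 + 1]`, where `x` returns to `0` at `b + t0`; slope `1`
again on `[b + t0 + 1, b + T0]`, where `x` stays negative and reaches `0` at `b + T0`. So `x`
restarts at `b + T0`, and induction over periods gives the claim. On each piece the sign of the
delayed argument is known only one unit of time ahead, whence an induction in unit steps; and a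
continuous function whose derivative is a constant `c` off a countable set is affine with slope
`c`, by the fundamental theorem of calculus.
-/

open Set

lemma countable_of_finite_inter_Icc {S : Set ℝ} (hS : ∀ A B : ℝ, (S ∩ Icc A B).Finite) :
    S.Countable := by
  refine (countable_iUnion fun n : ℕ => (hS (-n) n).countable).mono fun t ht => ?_
  obtain ⟨n, hn⟩ := exists_nat_ge |t|
  exact mem_iUnion.2 ⟨n, ht, abs_le.1 hn⟩

lemma eq_add_mul_sub_of_hasDerivAt_off_countable {f : ℝ → ℝ} {S : Set ℝ} {c α β : ℝ}
    (hS : S.Countable) (hαβ : α ≤ β) (hcont : ContinuousOn f (Icc α β))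
    (hderiv : ∀ t ∈ Ioo α β \ S, HasDerivAt f c t) :
    f β = f α + c * (β - α) := by
  have h := MeasureTheory.integral_eq_of_hasDerivAt_off_countable_of_le f (fun _ => c) hαβ hS
    hcont hderiv intervalIntegrable_const
  rw [intervalIntegral.integral_const, smul_eq_mul] at h
  linarith

lemma eqOn_Icc_line_of_delayed_deriv {f : ℝ → ℝ} {S : Set ℝ} {c α β : ℝ} (hS : S.Countable)
    (hcont : ContinuousOn f (Icc α β))
    (hstep : ∀ τ ∈ Icc α β, (∀ s ∈ Icc α τ, f s = f α + c * (s - α)) →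
      ∀ t ∈ Ioo α β \ S, t < τ + 1 → HasDerivAt f c t) :
    ∀ t ∈ Icc α β, f t = f α + c * (t - α) := by
  have hunit : ∀ n : ℕ, ∀ t ∈ Icc α β, t ≤ α + n → f t = f α + c * (t - α) := by
    intro n
    induction n with
    | zero =>
      intro t ht htα
      rw [le_antisymm (by simpa using htα) ht.1]
      ring
    | succ n ih =>
      intro t ht htn
      push_cast at htn
      have hτ : min (α + n) β ∈ Icc α β :=
        ⟨le_min (by linarith [n.cast_nonneg (α := ℝ)]) (ht.1.trans ht.2), min_le_right _ _⟩
      have hline : ∀ s ∈ Icc α (min (α + n) β), f s = f α + c * (s - α) := fun s hs =>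
        ih s ⟨hs.1, hs.2.trans (min_le_right _ _)⟩ (hs.2.trans (min_le_left _ _))
      refine eq_add_mul_sub_of_hasDerivAt_off_countable hS ht.1
        (hcont.mono (Icc_subset_Icc_right ht.2)) fun u hu => ?_
      refine hstep _ hτ hline u ⟨⟨hu.1.1, hu.1.2.trans_le ht.2⟩, hu.2⟩ ?_
      rcases min_cases (α + n) β with ⟨h, -⟩ | ⟨h, -⟩ <;> rw [h] <;> linarith [hu.1.2, ht.2]
  intro t ht
  obtain ⟨n, hn⟩ := exists_nat_ge (t - α)
  exact hunit n t ht (by linarith)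

lemma R_of_nonpos (a : ℝ) {v : ℝ} (h : v ≤ 0) : R a v = 1 := if_pos h

lemma R_of_pos (a : ℝ) {v : ℝ} (h : 0 < v) : R a v = -a := if_neg h.not_ge

section RelayPeriod

variable {a t0 T0 b : ℝ} {x : ℝ → ℝ} {S : Set ℝ}

lemma relay_rise (hS : S.Countable) (hcont : ContinuousOn x (Ici b))
    (hderiv : ∀ t, b < t → t ∉ S → HasDerivAt x (R a (x (t - 1))) t)
    (hneg : ∀ s ∈ Ico (b - 1) b, x s < 0) (hxb : x b = 0) :
    ∀ t ∈ Icc b (b + 1), x t = t - b := by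
  intro t ht
  have h := eq_add_mul_sub_of_hasDerivAt_off_countable (c := 1) hS ht.1
    (hcont.mono Icc_subset_Ici_self) fun u hu => by
      have hneg_u : x (u - 1) < 0 := hneg _ ⟨by linarith [hu.1.1], by linarith [hu.1.2, ht.2]⟩
      simpa only [R_of_nonpos a hneg_u.le] using hderiv u hu.1.1 hu.2
  rw [h, hxb]
  ring

lemma relay_fall (ha : 0 < a) (ht0 : a * t0 = a + 1) (hS : S.Countable)
    (hcont : ContinuousOn x (Ici b))
    (hderiv : ∀ t, b < t → t ∉ S → HasDerivAt x (R a (x (t - 1))) t)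
    (hrise : ∀ t ∈ Icc b (b + 1), x t = t - b) :
    ∀ t ∈ Icc (b + 1) (b + t0 + 1), x t = -a * (t - b - t0) := by
  have hx1 : x (b + 1) = 1 := by rw [hrise _ ⟨by linarith, le_rfl⟩]; ring
  have hline := eqOn_Icc_line_of_delayed_deriv (c := -a) (α := b + 1) (β := b + t0 + 1) hS
    (hcont.mono fun t ht => mem_Ici.2 (by linarith [ht.1])) fun τ hτ hlineτ u hu huτ => by
      have hpos : 0 < x (u - 1) := by
        rcases le_or_gt (u - 1) (b + 1) with h | h
        · rw [hrise _ ⟨by linarith [hu.1.1], h⟩]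
          linarith [hu.1.1]
        · rw [hlineτ _ ⟨h.le, by linarith⟩, hx1]
          nlinarith [mul_pos ha (show 0 < b + t0 + 1 - u by linarith [hu.1.2])]
      simpa only [R_of_pos a hpos] using hderiv u (by linarith [hu.1.1]) hu.2
  intro t ht
  rw [hline t ht, hx1]
  linear_combination -ht0

lemma relay_return (ha : 0 < a) (ht0 : a * t0 = a + 1) (hT0 : T0 = t0 + 1 + a)
    (hS : S.Countable) (hcont : ContinuousOn x (Ici b))
    (hderiv : ∀ t, b < t → t ∉ S → HasDerivAt x (R a (x (t - 1))) t)
    (hfall : ∀ t ∈ Icc (b + 1) (b + t0 + 1), x t = -a * (t - b - t0)) :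
    ∀ t ∈ Icc (b + t0 + 1) (b + T0), x t = t - b - T0 := by
  have ht0_gt : 1 < t0 := by nlinarith
  have hx1 : x (b + t0 + 1) = -a := by rw [hfall _ ⟨by linarith, le_rfl⟩]; ring
  have hline := eqOn_Icc_line_of_delayed_deriv (c := 1) (α := b + t0 + 1) (β := b + T0) hS
    (hcont.mono fun t ht => mem_Ici.2 (by linarith [ht.1])) fun τ hτ hlineτ u hu huτ => by
      have hnonpos : x (u - 1) ≤ 0 := by
        rcases le_or_gt (u - 1) (b + t0 + 1) with h | h
        · rw [hfall _ ⟨by linarith [hu.1.1], h⟩]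
          nlinarith [mul_pos ha (show 0 < u - 1 - b - t0 by linarith [hu.1.1])]
        · rw [hlineτ _ ⟨h.le, by linarith⟩, hx1]
          linarith [hu.1.2]
      simpa only [R_of_nonpos a hnonpos] using hderiv u (by linarith [hu.1.1]) hu.2
  intro t ht
  rw [hline t ht, hx1, hT0]
  ring

lemma relay_restart (ha : 0 < a) (ht0 : a * t0 = a + 1) (hT0 : T0 = t0 + 1 + a)
    (hfall : ∀ t ∈ Icc (b + 1) (b + t0 + 1), x t = -a * (t - b - t0))
    (hreturn : ∀ t ∈ Icc (b + t0 + 1) (b + T0), x t = t - b - T0) :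
    (∀ s ∈ Ico (b + T0 - 1) (b + T0), x s < 0) ∧ x (b + T0) = 0 := by
  have ht0_gt : 1 < t0 := by nlinarith
  refine ⟨fun s hs => ?_, ?_⟩
  · rcases le_or_gt s (b + t0 + 1) with h | h
    · rw [hfall s ⟨by linarith [hs.1], h⟩]
      nlinarith [mul_pos ha (show 0 < s - b - t0 by linarith [hs.1])]
    · rw [hreturn s ⟨h.le, hs.2.le⟩]
      linarith [hs.2]
  · rw [hreturn _ ⟨by linarith, le_rfl⟩]
    ring

lemma relay_period (ha : 0 < a) (ht0 : a * t0 = a + 1) (hT0 : T0 = t0 + 1 + a)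
    (hS : S.Countable) (hcont : ContinuousOn x (Ici b))
    (hderiv : ∀ t, b < t → t ∉ S → HasDerivAt x (R a (x (t - 1))) t) {x0 : ℝ → ℝ}
    (hx0a : ∀ t ∈ Icc (0 : ℝ) 1, x0 t = t)
    (hx0b : ∀ t ∈ Icc (1 : ℝ) (t0 + 1), x0 t = -a * (t - t0))
    (hx0c : ∀ t ∈ Icc (t0 + 1) T0, x0 t = t - T0)
    (hneg : ∀ s ∈ Ico (b - 1) b, x s < 0) (hxb : x b = 0) :
    (∀ t ∈ Icc b (b + T0), x t = x0 (t - b)) ∧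
      (∀ s ∈ Ico (b + T0 - 1) (b + T0), x s < 0) ∧ x (b + T0) = 0 := by
  have hrise := relay_rise hS hcont hderiv hneg hxb
  have hfall := relay_fall ha ht0 hS hcont hderiv hrise
  have hreturn := relay_return ha ht0 hT0 hS hcont hderiv hfall
  refine ⟨fun t ht => ?_, relay_restart ha ht0 hT0 hfall hreturn⟩
  rcases le_or_gt t (b + 1) with h₁ | h₁
  · rw [hrise t ⟨ht.1, h₁⟩, hx0a _ ⟨by linarith [ht.1], by linarith⟩]
  rcases le_or_gt t (b + t0 + 1) with h₂ | h₂
  · rw [hfall t ⟨h₁.le, h₂⟩, hx0b _ ⟨by linarith, by linarith⟩]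
  · rw [hreturn t ⟨h₂.le, ht.2⟩, hx0c _ ⟨by linarith, by linarith [ht.2]⟩]

end RelayPeriod

theorem stmt_1_general (a : ℝ) (ha : 0 < a) (t0 T0 : ℝ)
    (ht0 : t0 = (a + 1) / a) (hT0 : T0 = (a + 1) ^ 2 / a)
    (φ : ℝ → ℝ)
    (hφneg : ∀ t ∈ Set.Ico (-1 : ℝ) 0, φ t < 0) (hφ0 : φ 0 = 0)
    (x : ℝ → ℝ) (hx : IsSolution a φ x)
    (x0 : ℝ → ℝ)
    (hx0per : ∀ t : ℝ, x0 (t + T0) = x0 t)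
    (hx0a : ∀ t ∈ Set.Icc (0 : ℝ) 1, x0 t = t)
    (hx0b : ∀ t ∈ Set.Icc (1 : ℝ) (t0 + 1), x0 t = -a * (t - t0))
    (hx0c : ∀ t ∈ Set.Icc (t0 + 1) T0, x0 t = t - T0) :
    ∀ t : ℝ, 0 ≤ t → x t = x0 t := by
  obtain ⟨hcont, hxφ, S, hSfin, hderiv⟩ := hx
  have ht0' : a * t0 = a + 1 := by rw [ht0]; field_simp
  have hT0' : T0 = t0 + 1 + a := by rw [hT0, ht0]; field_simp; ring
  have hT0pos : 0 < T0 := hT0 ▸ by positivity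
  have period : ∀ b ≥ 0, (∀ s ∈ Ico (b - 1) b, x s < 0) → x b = 0 →
      (∀ t ∈ Icc b (b + T0), x t = x0 (t - b)) ∧
        (∀ s ∈ Ico (b + T0 - 1) (b + T0), x s < 0) ∧ x (b + T0) = 0 := fun b hb =>
    relay_period ha ht0' hT0' (countable_of_finite_inter_Icc hSfin)
      (hcont.mono (Ici_subset_Ici.2 (by linarith))) (fun t hbt => hderiv t (hb.trans_lt hbt))
      hx0a hx0b hx0c
  have restart : ∀ n : ℕ, (∀ s ∈ Ico (n * T0 - 1) (n * T0), x s < 0) ∧ x (n * T0) = 0 := by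
    intro n
    induction n with
    | zero =>
      rw [Nat.cast_zero, zero_mul, zero_sub]
      exact ⟨fun s hs => (hxφ s ⟨hs.1, hs.2.le⟩).trans_lt (hφneg s hs),
        (hxφ 0 ⟨by norm_num, le_rfl⟩).trans hφ0⟩
    | succ n ih =>
      rw [Nat.cast_succ, add_one_mul]
      exact (period _ (by positivity) ih.1 ih.2).2
  intro t ht
  obtain ⟨n, hn₁, hn₂⟩ : ∃ n : ℕ, n * T0 ≤ t ∧ t < (n + 1) * T0 :=
    ⟨⌊t / T0⌋₊, (le_div_iff₀ hT0pos).1 (Nat.floor_le (by positivity)),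
      (div_lt_iff₀ hT0pos).1 (Nat.lt_floor_add_one _)⟩
  rw [(period _ (by positivity) (restart n).1 (restart n).2).1 t ⟨hn₁, by linarith⟩,
    ((Function.Periodic.nat_mul hx0per n).sub_eq t)]

/-- a solution with a negative initial function vanishing at `0`
coincides with the `T0`-periodic function `x0` for all `t ≥ 0`. -/
theorem stmt_1 (a : ℝ) (ha : 0 < a) (t0 T0 : ℝ)
    (ht0 : t0 = (a + 1) / a) (hT0 : T0 = (a + 1) ^ 2 / a)
    (φ : ℝ → ℝ) (hφc : ContinuousOn φ (Set.Icc (-1 : ℝ) 0))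
    (hφneg : ∀ t ∈ Set.Ico (-1 : ℝ) 0, φ t < 0) (hφ0 : φ 0 = 0)
    (x : ℝ → ℝ) (hx : IsSolution a φ x)
    (x0 : ℝ → ℝ)
    (hx0per : ∀ t : ℝ, x0 (t + T0) = x0 t)
    (hx0a : ∀ t ∈ Set.Icc (0 : ℝ) 1, x0 t = t)
    (hx0b : ∀ t ∈ Set.Icc (1 : ℝ) (t0 + 1), x0 t = -a * (t - t0))
    (hx0c : ∀ t ∈ Set.Icc (t0 + 1) T0, x0 t = t - T0) :
    ∀ t : ℝ, 0 ≤ t → x t = x0 t :=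
  stmt_1_general a ha t0 T0 ht0 hT0 φ hφneg hφ0 x hx x0 hx0per hx0a hx0b hx0c
end

section
/- Let a > 0, t0 = (a+1)/a, T0 = (a+1)^2/a, and define Φ : ℝ² → ℝ² by Φ(θ,τ) = ((a+1)(θ−τ), (a+1)(t0·θ − τ) − t0). Let v* = (θ̃,τ̃) with θ̃ = (a+1)^2/(a^2+3a+1), τ̃ = a(a+1)/(a^2+3a+1). Then for every v ∈ ℝ², Φ(Φ(v)) − v* = −T0·(v − v*); consequently, for every natural number k and every v ∈ ℝ², Φ^{2k}(v) = (−1)^k T0^k (v − v*) + v*. -/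
/-- The map `Φ(θ,τ) = ((a+1)(θ-τ), (a+1)(t0 θ - τ) - t0)`. -/
def Phi (a t0 : ℝ) : ℝ × ℝ → ℝ × ℝ :=
  fun v => ((a + 1) * (v.1 - v.2), (a + 1) * (t0 * v.1 - v.2) - t0)

/-- with `v* = (θ̃,τ̃)` the fixed point of `Φ`, one has
`Φ(Φ(v)) - v* = -T0 (v - v*)` for all `v`, and consequently
`Φ^[2k](v) = (-1)^k T0^k (v - v*) + v*` for all `k ∈ ℕ` and `v ∈ ℝ²`. -/
theorem stmt_13 (a : ℝ) (ha : 0 < a) (t0 T0 : ℝ)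
    (ht0 : t0 = (a + 1) / a) (hT0 : T0 = (a + 1) ^ 2 / a)
    (vstar : ℝ × ℝ)
    (hvstar : vstar = ((a + 1) ^ 2 / (a ^ 2 + 3 * a + 1),
                       a * (a + 1) / (a ^ 2 + 3 * a + 1))) :
    (∀ v : ℝ × ℝ, Phi a t0 (Phi a t0 v) - vstar = (-T0) • (v - vstar)) ∧
    (∀ (k : ℕ) (v : ℝ × ℝ),
      (Phi a t0)^[2 * k] v = ((-1 : ℝ) ^ k * T0 ^ k) • (v - vstar) + vstar) := by
  have ha' : a ≠ 0 := ne_of_gt ha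
  have hd : a ^ 2 + 3 * a + 1 ≠ 0 := by nlinarith
  have key : ∀ v : ℝ × ℝ, Phi a t0 (Phi a t0 v) - vstar = (-T0) • (v - vstar) := by
    intro v
    simp only [Phi, hvstar, ht0, hT0, Prod.ext_iff, Prod.smul_fst, Prod.smul_snd,
      Prod.fst_sub, Prod.snd_sub, smul_eq_mul]
    constructor <;> field_simp <;> ring
  refine ⟨key, fun k => ?_⟩
  induction k with
  | zero => intro v; simp
  | succ n ih =>
    intro v
    have h2 : 2 * (n + 1) = 2 + 2 * n := by ring
    rw [h2, Function.iterate_add_apply, ih]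
    have h3 := key (((-1 : ℝ) ^ n * T0 ^ n) • (v - vstar) + vstar)
    rw [add_sub_cancel_right] at h3
    have h4 := eq_add_of_sub_eq h3
    simp only [Function.iterate_succ_apply, Function.iterate_zero_apply] at h4 ⊢
    rw [h4, smul_smul]
    ring_nf
end

section
/- Let a > 0, t0 = (a+1)/a, and define Φ : ℝ² → ℝ² by Φ(θ,τ) = ((a+1)(θ−τ), (a+1)(t0·θ − τ) − t0). Let v* = ((a+1)^2/(a^2+3a+1), a(a+1)/(a^2+3a+1)). Then for every v = (θ,τ) ∈ ℝ² with v ≠ v*, there exists a natural number m such that, writing Φ^m(v) = (θ_m, τ_m), the condition 0 < τ_m < θ_m < 1 fails. -/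
/-- for every `v ≠ v* = (θ̃,τ̃)`, some iterate `Φ^[m](v) = (θ_m,τ_m)`
violates the condition `0 < τ_m < θ_m < 1`. -/
theorem stmt_14 (a : ℝ) (ha : 0 < a) (t0 : ℝ) (ht0 : t0 = (a + 1) / a)
    (vstar : ℝ × ℝ)
    (hvstar : vstar = ((a + 1) ^ 2 / (a ^ 2 + 3 * a + 1),
                       a * (a + 1) / (a ^ 2 + 3 * a + 1))) :
    ∀ v : ℝ × ℝ, v ≠ vstar →
      ∃ m : ℕ, ¬(0 < ((Phi a t0)^[m] v).2 ∧
                  ((Phi a t0)^[m] v).2 < ((Phi a t0)^[m] v).1 ∧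
                  ((Phi a t0)^[m] v).1 < 1) := by
  intro v hv
  by_contra hcon
  push_neg at hcon
  have ha0 : a ≠ 0 := ne_of_gt ha
  set r : ℝ := (a + 1) ^ 2 / a with hr
  have hr1 : 1 < r := by
    rw [hr, lt_div_iff₀ ha]; nlinarith
  have hrpos : 0 < r := lt_trans one_pos hr1
  have hD : (0:ℝ) < a ^ 2 + 3 * a + 1 := by nlinarith
  have hD0 : a ^ 2 + 3 * a + 1 ≠ 0 := ne_of_gt hD
  have step : ∀ w : ℝ × ℝ,
      (Phi a t0 (Phi a t0 w)).1 - vstar.1 = -r * (w.1 - vstar.1) ∧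
      (Phi a t0 (Phi a t0 w)).2 - vstar.2 = -r * (w.2 - vstar.2) := by
    intro w
    simp only [Phi, hvstar, ht0, hr]
    constructor <;> (field_simp; ring)
  have key : ∀ k : ℕ,
      ((Phi a t0)^[2 * k] v).1 - vstar.1 = (-r) ^ k * (v.1 - vstar.1) ∧
      ((Phi a t0)^[2 * k] v).2 - vstar.2 = (-r) ^ k * (v.2 - vstar.2) := by
    intro k
    induction k with
    | zero => simp
    | succ n ih =>
      have h2 : 2 * (n + 1) = 2 + 2 * n := by ring
      have hit : (Phi a t0)^[2 * (n + 1)] v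
          = Phi a t0 (Phi a t0 ((Phi a t0)^[2 * n] v)) := by
        rw [h2, Function.iterate_add_apply]
        rfl
      obtain ⟨s1, s2⟩ := step ((Phi a t0)^[2 * n] v)
      constructor
      · rw [hit, s1, ih.1, pow_succ]; ring
      · rw [hit, s2, ih.2, pow_succ]; ring
  have habs : ∀ (k : ℕ) (x c : ℝ), x - c = (-r) ^ k * (v.1 - vstar.1) → True := fun _ _ _ _ => trivial
  -- pick a coordinate where v differs from vstar
  have hcoord : v.1 ≠ vstar.1 ∨ v.2 ≠ vstar.2 := by
    by_contra h
    push_neg at h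
    exact hv (Prod.ext h.1 h.2)
  -- generic escape argument
  have escape : ∀ (d c : ℝ), d ≠ 0 →
      ∃ n : ℕ, 1 + |c| < r ^ n * |d| := by
    intro d c hd
    have hd' : 0 < |d| := abs_pos.mpr hd
    obtain ⟨n, hn⟩ := pow_unbounded_of_one_lt ((1 + |c|) / |d|) hr1
    exact ⟨n, by rwa [div_lt_iff₀ hd'] at hn⟩
  rcases hcoord with h1 | h2
  · obtain ⟨n, hn⟩ := escape (v.1 - vstar.1) vstar.1 (sub_ne_zero.mpr h1)
    obtain ⟨hτ, hθτ, hθ1⟩ := hcon (2 * n)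
    set x := ((Phi a t0)^[2 * n] v).1 with hx
    have hkk := (key n).1
    have hdist : |x - vstar.1| = r ^ n * |v.1 - vstar.1| := by
      rw [hkk, abs_mul, abs_pow, abs_neg, abs_of_pos hrpos]
    have hxlt : |x| < 1 := abs_lt.mpr ⟨by linarith, hθ1⟩
    have : |x - vstar.1| ≤ |x| + |vstar.1| := abs_sub x vstar.1
    linarith [hdist, hn]
  · obtain ⟨n, hn⟩ := escape (v.2 - vstar.2) vstar.2 (sub_ne_zero.mpr h2)
    obtain ⟨hτ, hθτ, hθ1⟩ := hcon (2 * n)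
    set x := ((Phi a t0)^[2 * n] v).2 with hx
    have hkk := (key n).2
    have hdist : |x - vstar.2| = r ^ n * |v.2 - vstar.2| := by
      rw [hkk, abs_mul, abs_pow, abs_neg, abs_of_pos hrpos]
    have hxlt : |x| < 1 := abs_lt.mpr ⟨by linarith, by linarith⟩
    have : |x - vstar.2| ≤ |x| + |vstar.2| := abs_sub x vstar.2
    linarith [hdist, hn]
end

section
/- Let a > 0, t0 = (a+1)/a, T0 = (a+1)^2/a, and let M3 be the 3×3 real matrix with rows (1, a+1, −(a+1)), (−1, 0, 0), (1/a, t0, 0). Then the eigenvalues of M3, regarded as a matrix over ℂ, are exactly 1, i·√T0 and −i·√T0; the two nonreal eigenvalues have absolute value √T0, and T0 = (a+1)^2/a ≥ 4 > 1, so both nonreal eigenvalues lie strictly outside the unit circle. -/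
/-!
`det (μ - M3) = (μ - 1) (μ² + T0)`, whose roots are `1` and `± i √T0`; and `T0 ≥ 4` is AM–GM,
`(a + 1)² ≥ 4a`.
-/

open Complex

theorem Matrix.spectrum_eq_of_eval_charpoly {K n : Type*} [Field K] [Fintype n] [DecidableEq n]
    (A : Matrix n n K) (r₁ r₂ r₃ : K)
    (h : ∀ μ, A.charpoly.eval μ = (μ - r₁) * (μ - r₂) * (μ - r₃)) :
    spectrum K A = {r₁, r₂, r₃} := by
  ext μ
  simp [Matrix.mem_spectrum_iff_isRoot_charpoly, h, sub_eq_zero, or_assoc]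

theorem eval_charpoly_M3 {K : Type*} [Field K] {a : K} (ha : a ≠ 0) (μ : K) :
    (!![1, a + 1, -(a + 1); -1, 0, 0; 1 / a, (a + 1) / a, 0] :
        Matrix (Fin 3) (Fin 3) K).charpoly.eval μ
      = (μ - 1) * (μ ^ 2 + (a + 1) ^ 2 / a) := by
  rw [Matrix.eval_charpoly, Matrix.det_fin_three]
  simp only [Matrix.scalar_apply, Matrix.sub_apply, Matrix.diagonal_apply, Fin.reduceEq,
    ↓reduceIte, Matrix.of_apply, Matrix.cons_val', Matrix.cons_val_zero, Matrix.cons_val_one,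
    Matrix.cons_val, Matrix.cons_val_fin_one]
  field_simp
  ring

theorem four_le_sq_add_one_div {a : ℝ} (ha : 0 < a) : 4 ≤ (a + 1) ^ 2 / a := by
  rw [le_div_iff₀ ha]
  nlinarith [sq_nonneg (a - 1)]

theorem Complex.sq_add_sq_eq_mul_sub_I_mul (μ s : ℂ) :
    μ ^ 2 + s ^ 2 = (μ - I * s) * (μ - -(I * s)) := by
  linear_combination s ^ 2 * I_sq

/-- for `M3` the 3×3 matrix (over `ℂ`) with rows `(1, a+1, -(a+1))`,
`(-1, 0, 0)`, `(1/a, t0, 0)`, the eigenvalues (the spectrum) are exactly `1`,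
`i√T0` and `-i√T0`; the two nonreal eigenvalues have absolute value `√T0`, and
`T0 = (a+1)²/a ≥ 4 > 1`, so both nonreal eigenvalues lie strictly outside the
unit circle. -/
theorem stmt_17 (a : ℝ) (ha : 0 < a) (t0 T0 : ℝ)
    (ht0 : t0 = (a + 1) / a) (hT0 : T0 = (a + 1) ^ 2 / a)
    (M3 : Matrix (Fin 3) (Fin 3) ℂ)
    (hM3 : M3 = !![1, (a : ℂ) + 1, -((a : ℂ) + 1); -1, 0, 0;
                   1 / (a : ℂ), (t0 : ℂ), 0]) :
    spectrum ℂ M3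
        = {1, Complex.I * (Real.sqrt T0 : ℂ), -(Complex.I * (Real.sqrt T0 : ℂ))} ∧
    ‖Complex.I * (Real.sqrt T0 : ℂ)‖ = Real.sqrt T0 ∧
    ‖-(Complex.I * (Real.sqrt T0 : ℂ))‖ = Real.sqrt T0 ∧
    4 ≤ T0 ∧ (1 : ℝ) < 4 ∧
    1 < ‖Complex.I * (Real.sqrt T0 : ℂ)‖ ∧
    1 < ‖-(Complex.I * (Real.sqrt T0 : ℂ))‖ := by
  have hT0_ge : 4 ≤ T0 := hT0 ▸ four_le_sq_add_one_div ha
  have hnorm : ‖I * (Real.sqrt T0 : ℂ)‖ = Real.sqrt T0 := by simp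
  have hsqrt : 1 < Real.sqrt T0 := Real.lt_sqrt_of_sq_lt (by linarith)
  refine ⟨?_, hnorm, by rw [norm_neg, hnorm], hT0_ge, by norm_num, by rwa [hnorm],
    by rwa [norm_neg, hnorm]⟩
  have ha' : (a : ℂ) ≠ 0 := by exact_mod_cast ha.ne'
  have ht0' : (t0 : ℂ) = (a + 1) / a := by rw [ht0]; push_cast; rfl
  have hT0' : (T0 : ℂ) = (a + 1) ^ 2 / a := by rw [hT0]; push_cast; rfl
  refine hM3 ▸ Matrix.spectrum_eq_of_eval_charpoly _ _ _ _ fun μ => ?_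
  rw [ht0', eval_charpoly_M3 ha', ← hT0', mul_assoc, ← sq_add_sq_eq_mul_sub_I_mul,
    ← ofReal_pow, Real.sq_sqrt (by linarith)]
end

section
/- Let a > 0, λ > 0, t0 = (a+1)/a, T0 = (a+1)^2/a, and let x0 : ℝ → ℝ be the T0-periodic function with x0(t) = t on [0,1], x0(t) = −a(t − t0) on [1, t0+1], x0(t) = t − T0 on [t0+1, T0]. Then the function u0(t) = exp(λ·x0(t)) is continuous, strictly positive, T0-periodic, and for every t ∈ ℝ not of the form 1 + kT0 or t0 + 1 + kT0 with k ∈ ℤ, u0 is differentiable at t with u0′(t) = λ·F(u0(t−1))·u0(t). -/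
/-!
By periodicity everything reduces to one period, on which `x0` is the sawtooth
`max (min r (-a * (r - t0))) (r - T0)`, a continuous function: the identities
`a * t0 = a + 1` and `T0 = t0 + 1 + a` make its three pieces meet. Away from the corners
`x0` has slope `-a` exactly where `x0 (t - 1) > 0` and slope `1` where `x0 (t - 1) ≤ 0`,
while `F a (exp (lam * y))` is `-a` or `1` according to the sign of `y`.
-/

/-- The relay nonlinearity of the Hutchinson equation: `F a u = 1` if `0 < u ≤ 1`,
`F a u = -a` if `u > 1` (the value off `(0,∞)` is irrelevant). -/
noncomputable def F (a u : ℝ) : ℝ := if 0 < u ∧ u ≤ 1 then 1 else if 1 < u then -a else 0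

open Set Filter Topology Function

namespace Function.Periodic

variable {E : Type*} {T x : ℝ}

theorem continuousAt_of_sub_zsmul [TopologicalSpace E] {f : ℝ → E} (hf : Periodic f T)
    (n : ℤ) (h : ContinuousAt f (x - n • T)) : ContinuousAt f x := by
  have : ContinuousAt (fun y => f (y - n • T)) x :=
    h.comp_of_eq (continuous_sub_right (n • T)).continuousAt rfl
  simpa only [hf.sub_zsmul_eq] using this

theorem continuous_of_continuousAt_Ico [TopologicalSpace E] {f : ℝ → E} (hf : Periodic f T)
    (hT : 0 < T) (c : ℝ) (h : ∀ s ∈ Ico c (c + T), ContinuousAt f s) : Continuous f :=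
  continuous_iff_continuousAt.2 fun x =>
    let ⟨n, hn, _⟩ := existsUnique_sub_zsmul_mem_Ico hT x c
    hf.continuousAt_of_sub_zsmul n (h _ hn)

theorem hasDerivAt_of_sub_zsmul [NormedAddCommGroup E] [NormedSpace ℝ E] {f : ℝ → E} {D : E}
    (hf : Periodic f T) (n : ℤ) (h : HasDerivAt f D (x - n • T)) : HasDerivAt f D x := by
  simpa only [hf.sub_zsmul_eq] using h.comp_sub_const x (n • T)

end Function.Periodic

theorem HasDerivAt.of_eqOn_Icc {E : Type*} [NormedAddCommGroup E] [NormedSpace ℝ E]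
    {f g : ℝ → E} {D : E} {l u s : ℝ} (hg : HasDerivAt g D s) (h : EqOn f g (Icc l u))
    (hs : s ∈ Ioo l u) : HasDerivAt f D s :=
  hg.congr_of_eventuallyEq (h.eventuallyEq_of_mem (Icc_mem_nhds hs.1 hs.2))

theorem F_exp_mul (a : ℝ) {lam : ℝ} (hlam : 0 < lam) (y : ℝ) :
    F a (Real.exp (lam * y)) = if 0 < y then -a else 1 := by
  split_ifs with hy
  · have h : 1 < Real.exp (lam * y) := Real.one_lt_exp_iff.2 (mul_pos hlam hy)
    rw [F, if_neg fun h' => h.not_ge h'.2, if_pos h]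
  · have h : Real.exp (lam * y) ≤ 1 :=
      Real.exp_le_one_iff.2 (mul_nonpos_of_nonneg_of_nonpos hlam.le (not_lt.1 hy))
    rw [F, if_pos ⟨Real.exp_pos _, h⟩]

section Sawtooth

variable {a t0 T0 : ℝ} {x0 : ℝ → ℝ}

theorem x0_eq_self_of_mem_Icc (hT0 : T0 = t0 + 1 + a) (hx0per : Periodic x0 T0)
    (hx0a : ∀ t ∈ Icc (0 : ℝ) 1, x0 t = t) (hx0c : ∀ t ∈ Icc (t0 + 1) T0, x0 t = t - T0) :
    ∀ r ∈ Icc (-a) 1, x0 r = r := by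
  intro r hr
  rcases le_or_gt 0 r with h | h
  · exact hx0a r ⟨h, hr.2⟩
  · rw [← hx0per r, hx0c (r + T0) ⟨by linarith [hr.1], by linarith⟩]
    ring

theorem x0_eq_sub_of_mem_Icc (hx0per : Periodic x0 T0)
    (hx0a : ∀ t ∈ Icc (0 : ℝ) 1, x0 t = t) (hx0c : ∀ t ∈ Icc (t0 + 1) T0, x0 t = t - T0) :
    ∀ r ∈ Icc (t0 + 1) (T0 + 1), x0 r = r - T0 := by
  intro r hr
  rcases le_or_gt r T0 with h | h
  · exact hx0c r ⟨hr.1, h⟩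
  · rw [← sub_add_cancel r T0, hx0per, hx0a (r - T0) ⟨by linarith, by linarith [hr.2]⟩]
    ring

theorem x0_eq_sawtooth (ha : 0 < a) (hat0 : a * t0 = a + 1) (hT0 : T0 = t0 + 1 + a)
    (hx0per : Periodic x0 T0) (hx0a : ∀ t ∈ Icc (0 : ℝ) 1, x0 t = t)
    (hx0b : ∀ t ∈ Icc (1 : ℝ) (t0 + 1), x0 t = -a * (t - t0))
    (hx0c : ∀ t ∈ Icc (t0 + 1) T0, x0 t = t - T0) :
    EqOn x0 (fun r => max (min r (-a * (r - t0))) (r - T0)) (Icc (-a) (T0 + 1)) := by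
  intro r hr
  dsimp only
  rcases le_total r 1 with h1 | h1
  · rw [x0_eq_self_of_mem_Icc hT0 hx0per hx0a hx0c r ⟨hr.1, h1⟩, min_eq_left (by nlinarith),
      max_eq_left (by nlinarith)]
  rcases le_total r (t0 + 1) with h2 | h2
  · rw [hx0b r ⟨h1, h2⟩, min_eq_right (by nlinarith), max_eq_left (by nlinarith)]
  · rw [x0_eq_sub_of_mem_Icc hx0per hx0a hx0c r ⟨h2, hr.2⟩, min_eq_right (by nlinarith),
      max_eq_right (by nlinarith)]

theorem continuous_x0 (ha : 0 < a) (hat0 : a * t0 = a + 1) (hT0 : T0 = t0 + 1 + a)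
    (hT0pos : 0 < T0) (hx0per : Periodic x0 T0) (hx0a : ∀ t ∈ Icc (0 : ℝ) 1, x0 t = t)
    (hx0b : ∀ t ∈ Icc (1 : ℝ) (t0 + 1), x0 t = -a * (t - t0))
    (hx0c : ∀ t ∈ Icc (t0 + 1) T0, x0 t = t - T0) : Continuous x0 := by
  refine hx0per.continuous_of_continuousAt_Ico hT0pos 0 fun s hs => ?_
  have hsaw : Continuous fun r : ℝ => max (min r (-a * (r - t0))) (r - T0) := by fun_prop
  refine hsaw.continuousAt.congr_of_eventuallyEq
    ((x0_eq_sawtooth ha hat0 hT0 hx0per hx0a hx0b hx0c).eventuallyEq_of_mem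
      (Icc_mem_nhds ?_ ?_)) <;> linarith [hs.1, hs.2]

theorem x0_pos_of_mem_Ioo (ha : 0 < a) (hx0a : ∀ t ∈ Icc (0 : ℝ) 1, x0 t = t)
    (hx0b : ∀ t ∈ Icc (1 : ℝ) (t0 + 1), x0 t = -a * (t - t0)) :
    ∀ r ∈ Ioo 0 t0, 0 < x0 r := by
  intro r hr
  rcases le_or_gt r 1 with h | h
  · rw [hx0a r ⟨hr.1.le, h⟩]; exact hr.1
  · rw [hx0b r ⟨h.le, by linarith [hr.2]⟩]; nlinarith [hr.2]

theorem x0_nonpos_of_mem_Icc (ha : 0 < a) (ht0 : 1 ≤ t0)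
    (hx0b : ∀ t ∈ Icc (1 : ℝ) (t0 + 1), x0 t = -a * (t - t0))
    (hx0c : ∀ t ∈ Icc (t0 + 1) T0, x0 t = t - T0) :
    ∀ r ∈ Icc t0 T0, x0 r ≤ 0 := by
  intro r hr
  rcases le_or_gt r (t0 + 1) with h | h
  · rw [hx0b r ⟨by linarith [hr.1], h⟩]; nlinarith [hr.1]
  · rw [hx0c r ⟨h.le, hr.2⟩]; linarith [hr.2]

theorem hasDerivAt_x0_of_mem_Ioo (ha : 0 < a) (ht0 : 1 ≤ t0)
    (hx0per : Periodic x0 T0) (hx0a : ∀ t ∈ Icc (0 : ℝ) 1, x0 t = t)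
    (hx0b : ∀ t ∈ Icc (1 : ℝ) (t0 + 1), x0 t = -a * (t - t0))
    (hx0c : ∀ t ∈ Icc (t0 + 1) T0, x0 t = t - T0) {s : ℝ} (hs : s ∈ Ioo 1 (T0 + 1))
    (hst0 : s ≠ t0 + 1) : HasDerivAt x0 (if 0 < x0 (s - 1) then -a else 1) s := by
  rcases hst0.lt_or_gt with h | h
  · rw [if_pos (x0_pos_of_mem_Ioo ha hx0a hx0b _ ⟨by linarith [hs.1], by linarith⟩)]
    have hline : HasDerivAt (fun r => -a * (r - t0)) (-a) s := by
      simpa using ((hasDerivAt_id s).sub_const t0).const_mul (-a)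
    exact hline.of_eqOn_Icc hx0b ⟨hs.1, h⟩
  · rw [if_neg (x0_nonpos_of_mem_Icc ha ht0 hx0b hx0c _ ⟨by linarith, by linarith [hs.2]⟩).not_gt]
    have hline : HasDerivAt (fun r => r - T0) 1 s := (hasDerivAt_id s).sub_const T0
    exact hline.of_eqOn_Icc (x0_eq_sub_of_mem_Icc hx0per hx0a hx0c) ⟨h, hs.2⟩

theorem hasDerivAt_x0 (ha : 0 < a) (ht0 : 1 ≤ t0) (hT0pos : 0 < T0)
    (hx0per : Periodic x0 T0) (hx0a : ∀ t ∈ Icc (0 : ℝ) 1, x0 t = t)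
    (hx0b : ∀ t ∈ Icc (1 : ℝ) (t0 + 1), x0 t = -a * (t - t0))
    (hx0c : ∀ t ∈ Icc (t0 + 1) T0, x0 t = t - T0) {t : ℝ}
    (ht : ∀ k : ℤ, t ≠ 1 + (k : ℝ) * T0 ∧ t ≠ t0 + 1 + (k : ℝ) * T0) :
    HasDerivAt x0 (if 0 < x0 (t - 1) then -a else 1) t := by
  obtain ⟨n, hn, -⟩ := existsUnique_sub_zsmul_mem_Ico hT0pos t 1
  rw [zsmul_eq_mul] at hn
  have hs1 : t - n * T0 ≠ 1 := fun h => (ht n).1 (by linarith)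
  have hst0 : t - n * T0 ≠ t0 + 1 := fun h => (ht n).2 (by linarith)
  refine hx0per.hasDerivAt_of_sub_zsmul n ?_
  rw [← hx0per.sub_zsmul_eq n, zsmul_eq_mul, sub_right_comm]
  exact hasDerivAt_x0_of_mem_Ioo ha ht0 hx0per hx0a hx0b hx0c
    ⟨lt_of_le_of_ne hn.1 hs1.symm, by linarith [hn.2]⟩ hst0

end Sawtooth

/-- with `x0` the `T0`-periodic solution, the function
`u0(t) = exp(λ x0(t))` is continuous, strictly positive, `T0`-periodic, and away
from the points `1 + k T0`, `t0 + 1 + k T0` (`k ∈ ℤ`) it is differentiable with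
`u0'(t) = λ F(u0(t-1)) u0(t)`. -/
theorem stmt_18 (a lam : ℝ) (ha : 0 < a) (hlam : 0 < lam) (t0 T0 : ℝ)
    (ht0 : t0 = (a + 1) / a) (hT0 : T0 = (a + 1) ^ 2 / a)
    (x0 : ℝ → ℝ)
    (hx0per : ∀ t : ℝ, x0 (t + T0) = x0 t)
    (hx0a : ∀ t ∈ Set.Icc (0 : ℝ) 1, x0 t = t)
    (hx0b : ∀ t ∈ Set.Icc (1 : ℝ) (t0 + 1), x0 t = -a * (t - t0))
    (hx0c : ∀ t ∈ Set.Icc (t0 + 1) T0, x0 t = t - T0) :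
    Continuous (fun t : ℝ => Real.exp (lam * x0 t)) ∧
    (∀ t : ℝ, 0 < Real.exp (lam * x0 t)) ∧
    (∀ t : ℝ, Real.exp (lam * x0 (t + T0)) = Real.exp (lam * x0 t)) ∧
    (∀ t : ℝ, (∀ k : ℤ, t ≠ 1 + (k : ℝ) * T0 ∧ t ≠ t0 + 1 + (k : ℝ) * T0) →
      HasDerivAt (fun s : ℝ => Real.exp (lam * x0 s))
        (lam * F a (Real.exp (lam * x0 (t - 1))) * Real.exp (lam * x0 t)) t) := by
  have hat0 : a * t0 = a + 1 := by rw [ht0]; field_simp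
  have ht0one : 1 ≤ t0 := by rw [ht0, le_div_iff₀ ha]; linarith
  have hperiod : T0 = t0 + 1 + a := by rw [hT0, ht0]; field_simp; ring
  have hT0pos : 0 < T0 := by rw [hT0]; positivity
  have hx0 : Continuous x0 := continuous_x0 ha hat0 hperiod hT0pos hx0per hx0a hx0b hx0c
  refine ⟨by fun_prop, fun t => Real.exp_pos _, fun t => by rw [hx0per], fun t ht => ?_⟩
  rw [F_exp_mul a hlam, mul_comm]
  exact ((hasDerivAt_x0 ha ht0one hT0pos hx0per hx0a hx0b hx0c ht).const_mul lam).exp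
end

section
/- Let a > 0, λ > 0, t0 = (a+1)/a, θ̃ = (a+1)^2/(a^2+3a+1), τ̃ = a(a+1)/(a^2+3a+1), and let y0 : ℝ → ℝ be the θ̃-periodic function with y0(t) = t on [0, 1−θ̃], y0(t) = −a(t − (1−θ̃)t0) on [1−θ̃, 1−τ̃], y0(t) = t − θ̃ on [1−τ̃, θ̃]. Then the function v0(t) = exp(λ·y0(t)) is continuous, strictly positive, periodic with period θ̃ < 1 (i.e., its period is strictly shorter than the delay), and for every t ∈ ℝ not of the form 1−θ̃ + kθ̃ or 1−τ̃ + kθ̃ with k ∈ ℤ, v0 is differentiable at t with v0′(t) = λ·F(v0(t−1))·v0(t). -/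
open Set Function

theorem Function.Periodic.continuous_of_continuousOn_Icc_s19 {α : Type*} [TopologicalSpace α]
    {f : ℝ → α} {c : ℝ} (hf : Periodic f c) (hc : 0 < c) (b : ℝ)
    (h : ContinuousOn f (Icc b (b + c))) : Continuous f := by
  have hleft : ContinuousOn f (Icc (b - c) b) := by
    have : ContinuousOn (fun x => f (x + c)) (Icc (b - c) b) :=
      h.comp (continuous_add_const c).continuousOn
        fun x hx => ⟨by linarith [hx.1], by linarith [hx.2]⟩
    simpa only [hf _] using this
  have hIcc : ContinuousOn f (Icc (b - c) (b + c)) := by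
    rw [← Icc_union_Icc_eq_Icc (b := b) (by linarith) (by linarith)]
    exact hleft.union_of_isClosed h isClosed_Icc isClosed_Icc
  refine continuous_iff_continuousAt.2 fun t => ?_
  obtain ⟨k, hk⟩ : ∃ k : ℤ, t - k * c ∈ Ico b (b + c) :=
    ⟨toIcoDiv hc b t, by simpa only [← self_sub_toIcoDiv_zsmul, zsmul_eq_mul]
      using toIcoMod_mem_Ico hc b t⟩
  have hs : ContinuousAt f (t - k * c) :=
    hIcc.continuousAt (Icc_mem_nhds (by linarith [hk.1]) hk.2)
  have hshift : f = fun x => f (x - k * c) := funext fun x => (hf.sub_int_mul_eq k).symm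
  rw [hshift]
  exact ContinuousAt.comp (f := fun x => x - k * c) (x := t) hs
    (continuous_sub_right _).continuousAt

theorem Function.Periodic.hasDerivAt_of_hasDerivAt_sub_int_mul {𝕜 E : Type*}
    [NontriviallyNormedField 𝕜] [NormedAddCommGroup E] [NormedSpace 𝕜 E]
    {f : 𝕜 → E} {f' : E} {c x : 𝕜} (hf : Periodic f c) (k : ℤ)
    (h : HasDerivAt f f' (x - k * c)) : HasDerivAt f f' x := by
  have hshift : f = fun y => f (y - k * c) := funext fun y => (hf.sub_int_mul_eq k).symm
  rw [hshift]
  exact h.comp_sub_const x _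

theorem F_of_mem_Ioc {a u : ℝ} (hu : u ∈ Ioc 0 1) : F a u = 1 := if_pos hu

theorem F_of_one_lt {a u : ℝ} (hu : 1 < u) : F a u = -a := by
  rw [F, if_neg fun h => hu.not_ge h.2, if_pos hu]

theorem breakpoints_lt_and_zero_eq_sub {a t0 θ τ : ℝ} (ha : 0 < a) (ht0 : t0 = (a + 1) / a)
    (hθ : θ = (a + 1) ^ 2 / (a ^ 2 + 3 * a + 1)) (hτ : τ = a * (a + 1) / (a ^ 2 + 3 * a + 1)) :
    0 < 1 - θ ∧ 1 - θ < (1 - θ) * t0 ∧ (1 - θ) * t0 < 1 - τ ∧ 1 - τ < θ ∧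
      (1 - θ) * t0 = θ - τ := by
  have hD : 0 < a ^ 2 + 3 * a + 1 := by positivity
  have h1θ : 1 - θ = a / (a ^ 2 + 3 * a + 1) := by rw [hθ]; field_simp; ring
  have h1τ : 1 - τ = (2 * a + 1) / (a ^ 2 + 3 * a + 1) := by rw [hτ]; field_simp; ring
  have hc : (1 - θ) * t0 = (a + 1) / (a ^ 2 + 3 * a + 1) := by
    rw [h1θ, ht0]; field_simp
  refine ⟨?_, ?_, ?_, ?_, ?_⟩
  · rw [h1θ]; positivity
  · rw [hc, h1θ]; gcongr; linarith
  · rw [hc, h1τ]; gcongr; linarith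
  · rw [h1τ, hθ]; gcongr; nlinarith
  · rw [hc, hθ, hτ]; field_simp; ring

structure IsSawtooth (a c θ τ : ℝ) (y : ℝ → ℝ) : Prop where
  periodic : Periodic y θ
  eq_rise : ∀ t ∈ Icc 0 (1 - θ), y t = t
  eq_fall : ∀ t ∈ Icc (1 - θ) (1 - τ), y t = -a * (t - c)
  eq_rise' : ∀ t ∈ Icc (1 - τ) θ, y t = t - θ

namespace IsSawtooth

variable {a c θ τ : ℝ} {y : ℝ → ℝ}

theorem eq_self (hy : IsSawtooth a c θ τ y) : ∀ s ∈ Icc (1 - τ - θ) (1 - θ), y s = s := by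
  rintro s ⟨hs₁, hs₂⟩
  rcases le_or_gt 0 s with hs | hs
  · exact hy.eq_rise s ⟨hs, hs₂⟩
  · rw [← hy.periodic s, hy.eq_rise' (s + θ) ⟨by linarith, by linarith⟩]
    ring

theorem continuous (hy : IsSawtooth a c θ τ y) (hθ : 0 < θ) (hτ : 0 ≤ τ) (hτθ : τ ≤ θ) :
    Continuous y := by
  refine hy.periodic.continuous_of_continuousOn_Icc_s19 hθ (1 - τ - θ) ?_
  rw [show 1 - τ - θ + θ = 1 - τ by ring, ← Icc_union_Icc_eq_Icc (b := 1 - θ)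
    (by linarith) (by linarith)]
  refine ContinuousOn.union_of_isClosed ?_ ?_ isClosed_Icc isClosed_Icc
  · exact continuousOn_id.congr hy.eq_self
  · exact (show Continuous fun t => -a * (t - c) by fun_prop).continuousOn.congr hy.eq_fall

theorem nonpos (hy : IsSawtooth a c θ τ y) (ha : 0 ≤ a) (hc : 1 - θ ≤ c) :
    ∀ r ∈ Icc c θ, y r ≤ 0 := by
  rintro r ⟨hr₁, hr₂⟩
  rcases le_or_gt r (1 - τ) with hr | hr
  · rw [hy.eq_fall r ⟨by linarith, hr⟩]
    nlinarith
  · rw [hy.eq_rise' r ⟨hr.le, hr₂⟩]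
    linarith

theorem pos (hy : IsSawtooth a c θ τ y) (ha : 0 < a) (hc : c ≤ 1 - τ) :
    ∀ r ∈ Ioo 0 c, 0 < y r := by
  rintro r ⟨hr₁, hr₂⟩
  rcases le_or_gt r (1 - θ) with hr | hr
  · rw [hy.eq_rise r ⟨hr₁.le, hr⟩]
    exact hr₁
  · rw [hy.eq_fall r ⟨hr.le, by linarith⟩]
    nlinarith

theorem hasDerivAt_one (hy : IsSawtooth a c θ τ y) {s : ℝ} (hs : s ∈ Ioo (1 - τ - θ) (1 - θ)) :
    HasDerivAt y 1 s :=
  (hasDerivAt_id s).congr_of_eventuallyEq <|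
    Filter.eventually_of_mem (Ioo_mem_nhds hs.1 hs.2) fun x hx => hy.eq_self x (Ioo_subset_Icc_self hx)

theorem hasDerivAt_neg (hy : IsSawtooth a c θ τ y) {s : ℝ} (hs : s ∈ Ioo (1 - θ) (1 - τ)) :
    HasDerivAt y (-a) s := by
  have hlin : HasDerivAt (fun t => -a * (t - c)) (-a) s := by
    simpa using ((hasDerivAt_id s).sub_const c).const_mul (-a)
  exact hlin.congr_of_eventuallyEq <|
    Filter.eventually_of_mem (Ioo_mem_nhds hs.1 hs.2) fun x hx => hy.eq_fall x (Ioo_subset_Icc_self hx)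

theorem hasDerivAt (hy : IsSawtooth a c θ τ y) {lam : ℝ} (ha : 0 < a) (hlam : 0 < lam)
    (hθ : 0 < θ) (hc : c = θ - τ) (hc₁ : 1 - θ < c) (hc₂ : c < 1 - τ) {t : ℝ}
    (ht : ∀ k : ℤ, t ≠ 1 - θ + k * θ ∧ t ≠ 1 - τ + k * θ) :
    HasDerivAt y (F a (Real.exp (lam * y (t - 1)))) t := by
  obtain ⟨k, hk₁, hk₂⟩ : ∃ k : ℤ, t - k * θ ∈ Ioc (1 - τ - θ) (1 - τ) :=
    ⟨toIocDiv hθ _ t, by simpa only [← self_sub_toIocDiv_zsmul, zsmul_eq_mul, sub_add_cancel]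
      using toIocMod_mem_Ioc hθ (1 - τ - θ) t⟩
  refine hy.periodic.hasDerivAt_of_hasDerivAt_sub_int_mul k ?_
  have hk₂' : t - k * θ < 1 - τ := hk₂.lt_of_ne fun h => (ht k).2 (by linarith)
  rcases (show t - k * θ ≠ 1 - θ from fun h => (ht k).1 (by linarith)).lt_or_gt with hs | hs
  · have hdelay : y (t - 1) ≤ 0 := by
      rw [← hy.periodic.sub_int_mul_eq (k - 2)]
      exact hy.nonpos ha.le hc₁.le _ ⟨by push_cast; linarith, by push_cast; linarith⟩
    rw [F_of_mem_Ioc ⟨Real.exp_pos _, Real.exp_le_one_iff.2 (by nlinarith)⟩]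
    exact hy.hasDerivAt_one ⟨hk₁, hs⟩
  · have hdelay : 0 < y (t - 1) := by
      rw [← hy.periodic.sub_int_mul_eq (k - 1)]
      exact hy.pos ha hc₂.le _ ⟨by push_cast; linarith, by push_cast; linarith⟩
    rw [F_of_one_lt (Real.one_lt_exp_iff.2 (by positivity))]
    exact hy.hasDerivAt_neg ⟨hs, hk₂'⟩

end IsSawtooth

/-- with `y0` the `θ̃`-periodic solution, the function
`v0(t) = exp(λ y0(t))` is continuous, strictly positive, periodic with period
`θ̃ < 1` (strictly shorter than the delay), and away from the points `1-θ̃+kθ̃`,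
`1-τ̃+kθ̃` (`k ∈ ℤ`) it is differentiable with `v0'(t) = λ F(v0(t-1)) v0(t)`. -/
theorem stmt_19 (a lam : ℝ) (ha : 0 < a) (hlam : 0 < lam) (t0 θt τt : ℝ)
    (ht0 : t0 = (a + 1) / a)
    (hθt : θt = (a + 1) ^ 2 / (a ^ 2 + 3 * a + 1))
    (hτt : τt = a * (a + 1) / (a ^ 2 + 3 * a + 1))
    (y0 : ℝ → ℝ)
    (hy0per : ∀ t : ℝ, y0 (t + θt) = y0 t)
    (hy0a : ∀ t ∈ Set.Icc (0 : ℝ) (1 - θt), y0 t = t)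
    (hy0b : ∀ t ∈ Set.Icc (1 - θt) (1 - τt), y0 t = -a * (t - (1 - θt) * t0))
    (hy0c : ∀ t ∈ Set.Icc (1 - τt) θt, y0 t = t - θt) :
    Continuous (fun t : ℝ => Real.exp (lam * y0 t)) ∧
    (∀ t : ℝ, 0 < Real.exp (lam * y0 t)) ∧
    (∀ t : ℝ, Real.exp (lam * y0 (t + θt)) = Real.exp (lam * y0 t)) ∧
    θt < 1 ∧
    (∀ t : ℝ, (∀ k : ℤ, t ≠ 1 - θt + (k : ℝ) * θt ∧ t ≠ 1 - τt + (k : ℝ) * θt) →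
      HasDerivAt (fun s : ℝ => Real.exp (lam * y0 s))
        (lam * F a (Real.exp (lam * y0 (t - 1))) * Real.exp (lam * y0 t)) t) := by
  obtain ⟨h1θ, hc₁, hc₂, h1τ, hc⟩ := breakpoints_lt_and_zero_eq_sub ha ht0 hθt hτt
  have hy : IsSawtooth a ((1 - θt) * t0) θt τt y0 := ⟨hy0per, hy0a, hy0b, hy0c⟩
  refine ⟨?_, fun t => Real.exp_pos _, fun t => by rw [hy0per], by linarith, fun t ht => ?_⟩
  · have := hy.continuous (by linarith) (by linarith) (by linarith)
    fun_prop
  · convert ((hy.hasDerivAt ha hlam (by linarith) hc hc₁ hc₂ ht).const_mul lam).exp using 1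
    ring
end
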